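/- With the hypotheses of the previous statement (f_t Möbius conjugate to polynomials for all t ∈ D*, f_t → φ locally uniformly on P^1 \ {h} with deg φ = d − 1 > 0, and p_t → h where p_t is the totally ramified fixed point of f_t), the limit map φ satisfies φ^{-1}(h) = {h}. -/

import Mathlib

/-!
With `R = A - h B` it suffices that the form `R` of degree `d - 1` vanishes on `ℙ¹` only at
`[h : 1]`. Total ramification gives `f_t - p_t = c_t (z - p_t)^d / Q_t`. If `R(v₀) = 0` for some
`v₀ ≠ [h : 1]`, this tends to `φ(v₀) - h = 0` at `v₀` but to `φ(x) - h ≠ 0` at all but finitely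
many `x`, so `Q_t(x) / Q_t(v₀) → 0` at `d + 1` such points. Since `Q_t` has degree `d`, Lagrange
interpolation expresses `Q_t(v₀)` as a fixed linear combination of the `Q_t(x)`, and
`1 = Q_t(v₀) / Q_t(v₀) → 0`.
-/

open Filter Topology Polynomial

/-- The chordal distance between the points `[v₁ : v₂]` and `[w₁ : w₂]` of `ℙ¹`, written in
homogeneous coordinates: `[v, w] = |v₁w₂ − v₂w₁| / (‖v‖‖w‖)`. -/
noncomputable def chordalP1 (v w : ℂ × ℂ) : ℝ :=
  ‖v.1 * w.2 - v.2 * w.1‖ /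
    (Real.sqrt (‖v.1‖ ^ 2 + ‖v.2‖ ^ 2) *
      Real.sqrt (‖w.1‖ ^ 2 + ‖w.2‖ ^ 2))

/-- Evaluation at `(z, w)` of the degree-`n` homogenization of a polynomial `P`. -/
noncomputable def homEval (P : Polynomial ℂ) (n : ℕ) (v : ℂ × ℂ) : ℂ :=
  ∑ i ∈ Finset.range (n + 1), P.coeff i * v.1 ^ i * v.2 ^ (n - i)

lemma homEval_mul_mk {P : ℂ[X]} {n : ℕ} (hP : P.natDegree ≤ n) (z y : ℂ) :
    homEval P n (z * y, y) = y ^ n * P.eval z := by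
  rw [homEval, eval_eq_sum_range' (Nat.lt_succ_of_le hP), Finset.mul_sum]
  refine Finset.sum_congr rfl fun i hi => ?_
  have hin : i ≤ n := Nat.lt_succ_iff.mp (Finset.mem_range.mp hi)
  calc P.coeff i * (z * y) ^ i * y ^ (n - i) = P.coeff i * z ^ i * (y ^ i * y ^ (n - i)) := by
        ring
    _ = y ^ n * (P.coeff i * z ^ i) := by rw [← pow_add, Nat.add_sub_cancel' hin]; ring

lemma homEval_mk_one {P : ℂ[X]} {n : ℕ} (hP : P.natDegree ≤ n) (z : ℂ) :
    homEval P n (z, 1) = P.eval z := by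
  simpa using homEval_mul_mk hP z 1

lemma homEval_mk_zero (P : ℂ[X]) (n : ℕ) (x : ℂ) :
    homEval P n (x, 0) = P.coeff n * x ^ n := by
  rw [homEval, Finset.sum_eq_single_of_mem n (Finset.self_mem_range_succ n)]
  · simp
  · intro i hi hin
    have : n - i ≠ 0 := by have := Finset.mem_range.mp hi; omega
    simp [zero_pow this]

lemma homEval_sub (P Q : ℂ[X]) (n : ℕ) (v : ℂ × ℂ) :
    homEval (P - Q) n v = homEval P n v - homEval Q n v := by
  simp only [homEval, coeff_sub, sub_mul, Finset.sum_sub_distrib]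

lemma homEval_C_mul (a : ℂ) (P : ℂ[X]) (n : ℕ) (v : ℂ × ℂ) :
    homEval (C a * P) n v = a * homEval P n v := by
  simp only [homEval, coeff_C_mul, Finset.mul_sum, mul_assoc]

lemma homEval_sum {ι : Type*} (s : Finset ι) (f : ι → ℂ[X]) (n : ℕ) (v : ℂ × ℂ) :
    homEval (∑ i ∈ s, f i) n v = ∑ i ∈ s, homEval (f i) n v := by
  simp only [homEval, finsetSum_coeff, Finset.sum_mul]
  exact Finset.sum_comm

lemma homEval_X_sub_C_pow (a : ℂ) (n : ℕ) (v : ℂ × ℂ) :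
    homEval ((X - C a) ^ n) n v = (v.1 - a * v.2) ^ n := by
  rw [show (X - C a) ^ n = (X + C (-a)) ^ n by rw [C_neg, ← sub_eq_add_neg], homEval,
    sub_eq_add_neg v.1, ← neg_mul, (Commute.all v.1 (-a * v.2)).add_pow]
  refine Finset.sum_congr rfl fun i _ => ?_
  rw [coeff_X_add_C_pow, mul_pow]
  ring

lemma homEval_sub_mul_eq_of_sub_C_mul_eq {P Q : ℂ[X]} {a c : ℂ} {n : ℕ}
    (h : P - C a * Q = C c * (X - C a) ^ n) (v : ℂ × ℂ) :
    homEval P n v - a * homEval Q n v = c * (v.1 - a * v.2) ^ n := by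
  rw [← homEval_C_mul, ← homEval_sub, h, homEval_C_mul, homEval_X_sub_C_pow]

lemma homEval_eq_sum_lagrange {Q : ℂ[X]} {d : ℕ} {s : Finset ℂ} (hs : s.card = d + 1)
    (hQ : Q.natDegree ≤ d) (v : ℂ × ℂ) :
    homEval Q d v = ∑ x ∈ s, Q.eval x * homEval (Lagrange.basis s id x) d v := by
  have hlt : Q.degree < s.card := by
    rw [hs]
    exact degree_le_natDegree.trans_lt (by exact_mod_cast Nat.lt_succ_of_le hQ)
  conv_lhs => rw [Lagrange.eq_interpolate (Set.injOn_id _) hlt, Lagrange.interpolate_apply]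
  simp [homEval_sum, homEval_C_mul]

section

variable {K : Type*} [Field K] {A B : K[X]}

lemma coeff_ne_zero_or_of_isCoprime {n : ℕ} (hAB : IsCoprime A B)
    (hdeg : max A.natDegree B.natDegree = n) : A.coeff n ≠ 0 ∨ B.coeff n ≠ 0 := by
  wlog hA : A.natDegree = n generalizing A B
  · have hB : B.natDegree = n := by omega
    exact (this hAB.symm (by rwa [max_comm]) hB).symm
  by_contra! h0
  obtain rfl : A = 0 := leadingCoeff_eq_zero.mp (by rw [leadingCoeff, hA, h0.1])
  obtain ⟨b, hb, rfl⟩ := Polynomial.isUnit_iff.mp (isCoprime_zero_left.mp hAB)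
  subst hA
  simp_all

lemma sub_C_mul_ne_zero_of_isCoprime (hAB : IsCoprime A B)
    (hdeg : max A.natDegree B.natDegree ≠ 0) (a : K) : A - C a * B ≠ 0 := by
  intro h
  rw [sub_eq_zero] at h
  have hB := natDegree_eq_zero_of_isUnit (isCoprime_self.mp (h ▸ hAB).of_mul_left_right)
  have hA : A.natDegree = 0 :=
    Nat.eq_zero_of_le_zero (h ▸ (natDegree_C_mul_le a B).trans hB.le)
  simp [hA, hB] at hdeg

lemma ne_zero_of_isCoprime_right (hAB : IsCoprime A B)
    (hdeg : max A.natDegree B.natDegree ≠ 0) : B ≠ 0 := by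
  rintro rfl
  simp [natDegree_eq_zero_of_isUnit (isCoprime_zero_right.mp hAB)] at hdeg

lemma exists_finset_card_eq_forall_eval_ne_zero [Infinite K] {F : K[X]} (hF : F ≠ 0) (n : ℕ) :
    ∃ s : Finset K, s.card = n ∧ ∀ x ∈ s, F.eval x ≠ 0 := by
  obtain ⟨s, hs_sub, hs⟩ := (finite_setOfPred_isRoot hF).infinite_compl.exists_subset_card_eq n
  exact ⟨s, hs, fun x hx => hs_sub hx⟩

lemma eq_C_leadingCoeff_mul_X_sub_C_pow [IsAlgClosed K] {R : K[X]} {n : ℕ} {a : K}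
    (hdeg : R.natDegree = n) (hroot : ∀ z, R.IsRoot z → z = a) :
    R = C R.leadingCoeff * (X - C a) ^ n := by
  have hroots : R.roots = Multiset.replicate n a :=
    Multiset.eq_replicate.mpr ⟨by rw [IsAlgClosed.card_roots_eq_natDegree, hdeg],
      fun z hz => hroot z (isRoot_of_mem_roots hz)⟩
  conv_lhs => rw [(IsAlgClosed.splits R).eq_prod_roots, hroots]
  simp

end

lemma homEval_prodMk_ne_zero_of_isCoprime {A B : ℂ[X]} {n : ℕ} (hAB : IsCoprime A B)
    (hdeg : max A.natDegree B.natDegree = n) {v : ℂ × ℂ} (hv : v ≠ 0) :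
    (homEval A n v, homEval B n v) ≠ 0 := by
  obtain ⟨x, y⟩ := v
  rcases eq_or_ne y 0 with rfl | hy
  · have hx : x ≠ 0 := by rintro rfl; exact hv rfl
    intro h0
    simp only [Prod.mk_eq_zero, homEval_mk_zero, mul_eq_zero, pow_eq_zero_iff', hx, false_and,
      or_false] at h0
    exact (coeff_ne_zero_or_of_isCoprime hAB hdeg).elim (· h0.1) (· h0.2)
  · obtain ⟨z, rfl⟩ : ∃ z, x = z * y := ⟨x / y, (div_mul_cancel₀ x hy).symm⟩
    intro h0
    simp only [Prod.mk_eq_zero, homEval_mul_mk (hdeg ▸ le_max_left _ _),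
      homEval_mul_mk (hdeg ▸ le_max_right _ _), mul_eq_zero, pow_eq_zero_iff', hy, false_and,
      false_or] at h0
    exact (aeval_ne_zero_of_isCoprime hAB z).elim (· (by simpa using h0.1))
      (· (by simpa using h0.2))

lemma chordalP1_nonneg (v w : ℂ × ℂ) : 0 ≤ chordalP1 v w := by
  unfold chordalP1; positivity

lemma norm_div_sub_div_le_chordalP1 {a b α β : ℂ} (hβ : β ≠ 0) (hab : (a, b) ≠ 0)
    (hsmall : 2 * chordalP1 (a, b) (α, β) * √(‖α‖ ^ 2 + ‖β‖ ^ 2) ≤ ‖β‖) :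
    b ≠ 0 ∧ ‖a / b - α / β‖ ≤
      chordalP1 (a, b) (α, β) * (2 * √(‖α‖ ^ 2 + ‖β‖ ^ 2) * (‖α‖ + ‖β‖) / ‖β‖ ^ 2) := by
  set e := chordalP1 (a, b) (α, β) with he
  set N := √(‖a‖ ^ 2 + ‖b‖ ^ 2)
  set M := √(‖α‖ ^ 2 + ‖β‖ ^ 2)
  have hβ' : 0 < ‖β‖ := norm_pos_iff.mpr hβ
  have hM : 0 < M := Real.sqrt_pos.mpr (by positivity)
  have hN : 0 < N := by
    rcases not_and_or.mp (Prod.mk_eq_zero.not.mp hab) with ha | hb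
    · exact Real.sqrt_pos.mpr (by have := norm_pos_iff.mpr ha; positivity)
    · exact Real.sqrt_pos.mpr (by have := norm_pos_iff.mpr hb; positivity)
  have hN_le : N ≤ ‖a‖ + ‖b‖ :=
    Real.sqrt_le_iff.mpr ⟨by positivity, by nlinarith [norm_nonneg a, norm_nonneg b]⟩
  have hcross : ‖a * β - b * α‖ = e * (N * M) := by
    rw [he, chordalP1, div_mul_cancel₀ _ (by positivity)]
  have htri : ‖a‖ * ‖β‖ ≤ e * (N * M) + ‖b‖ * ‖α‖ := by
    rw [← hcross, ← norm_mul, ← norm_mul]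
    calc ‖a * β‖ = ‖(a * β - b * α) + b * α‖ := by ring_nf
      _ ≤ _ := norm_add_le _ _
  -- `2 e M ≤ ‖β‖` keeps `‖b‖` comparable to `N`
  have hb_lower : N * ‖β‖ ≤ 2 * ‖b‖ * (‖α‖ + ‖β‖) := by nlinarith
  have hb : b ≠ 0 := by
    rintro rfl
    simp only [norm_zero, mul_zero, zero_mul] at hb_lower
    linarith [mul_pos hN hβ']
  refine ⟨hb, ?_⟩
  have hb' : 0 < ‖b‖ := norm_pos_iff.mpr hb
  have he0 : 0 ≤ e := chordalP1_nonneg _ _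
  rw [div_sub_div _ _ hb hβ, norm_div, norm_mul, hcross, div_le_iff₀ (by positivity),
    mul_div_assoc', div_mul_eq_mul_div, le_div_iff₀ (by positivity)]
  nlinarith [mul_le_mul_of_nonneg_left hb_lower (by positivity : 0 ≤ e * M * ‖β‖)]

lemma tendsto_div_of_tendsto_chordalP1 {ι : Type*} {l : Filter ι} {a b : ι → ℂ} {α β : ℂ}
    (hβ : β ≠ 0) (hab : ∀ᶠ t in l, (a t, b t) ≠ 0)
    (hlim : Tendsto (fun t => chordalP1 (a t, b t) (α, β)) l (𝓝 0)) :
    (∀ᶠ t in l, b t ≠ 0) ∧ Tendsto (fun t => a t / b t) l (𝓝 (α / β)) := by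
  have hsmall : ∀ᶠ t in l, 2 * chordalP1 (a t, b t) (α, β) * √(‖α‖ ^ 2 + ‖β‖ ^ 2) ≤ ‖β‖ := by
    have : Tendsto (fun t => 2 * chordalP1 (a t, b t) (α, β) * √(‖α‖ ^ 2 + ‖β‖ ^ 2)) l
        (𝓝 0) := by
      simpa using (hlim.const_mul 2).mul_const _
    exact (this.eventually_lt_const (norm_pos_iff.mpr hβ)).mono fun t ht => ht.le
  have hest := (hab.and hsmall).mono fun t ht => norm_div_sub_div_le_chordalP1 hβ ht.1 ht.2
  refine ⟨hest.mono fun t ht => ht.1, tendsto_iff_norm_sub_tendsto_zero.mpr ?_⟩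
  refine squeeze_zero' (.of_forall fun t => norm_nonneg _) (hest.mono fun t ht => ht.2) ?_
  simpa using hlim.mul_const _

section Family

variable {ι : Type*} {l : Filter ι} {d : ℕ} {P Q : ι → ℂ[X]}

lemma not_forall_tendsto_eval_div_homEval_zero [l.NeBot] {s : Finset ℂ} (hs : s.card = d + 1)
    {v : ℂ × ℂ} (hQ : ∀ᶠ t in l, (Q t).natDegree ≤ d ∧ homEval (Q t) d v ≠ 0) :
    ¬ ∀ x ∈ s, Tendsto (fun t => (Q t).eval x / homEval (Q t) d v) l (𝓝 0) := by
  intro h0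
  set L := fun x => homEval (Lagrange.basis s id x) d v
  have hsum : Tendsto (fun t => ∑ x ∈ s, (Q t).eval x / homEval (Q t) d v * L x) l (𝓝 0) := by
    simpa using tendsto_finsetSum s fun x hx => (h0 x hx).mul_const (L x)
  have hone : ∀ᶠ t in l, ∑ x ∈ s, (Q t).eval x / homEval (Q t) d v * L x = 1 :=
    hQ.mono fun t ht => by
      simp_rw [div_mul_eq_mul_div]
      rw [← Finset.sum_div, ← homEval_eq_sum_lagrange hs ht.1, div_self ht.2]
  exact zero_ne_one <| tendsto_nhds_unique hsum <| tendsto_const_nhds.congr' <|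
    hone.mono fun t ht => ht.symm

lemma tendsto_homEval_div_homEval_of_chordalP1 {n : ℕ} {A B : ℂ[X]}
    (hPQ : ∀ᶠ t in l, IsCoprime (P t) (Q t) ∧ max (P t).natDegree (Q t).natDegree = d)
    {v : ℂ × ℂ} (hv : v ≠ 0) (hBv : homEval B n v ≠ 0)
    (hlim : Tendsto (fun t => chordalP1 (homEval (P t) d v, homEval (Q t) d v)
      (homEval A n v, homEval B n v)) l (𝓝 0)) :
    (∀ᶠ t in l, homEval (Q t) d v ≠ 0) ∧
      Tendsto (fun t => homEval (P t) d v / homEval (Q t) d v) l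
        (𝓝 (homEval A n v / homEval B n v)) :=
  tendsto_div_of_tendsto_chordalP1 hBv
    (hPQ.mono fun _ ht => homEval_prodMk_ne_zero_of_isCoprime ht.1 ht.2 hv) hlim

variable {p c : ι → ℂ} {h : ℂ}

lemma tendsto_homEval_div_homEval_zero
    (hsuper : ∀ᶠ t in l, c t ≠ 0 ∧ P t - C (p t) * Q t = C (c t) * (X - C (p t)) ^ d)
    (hp : Tendsto p l (𝓝 h)) {v w : ℂ × ℂ} (hv : v.1 ≠ h * v.2) {α : ℂ} (hα : α ≠ h)
    (hQv : ∀ᶠ t in l, homEval (Q t) d v ≠ 0) (hQw : ∀ᶠ t in l, homEval (Q t) d w ≠ 0)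
    (hfv : Tendsto (fun t => homEval (P t) d v / homEval (Q t) d v) l (𝓝 h))
    (hfw : Tendsto (fun t => homEval (P t) d w / homEval (Q t) d w) l (𝓝 α)) :
    Tendsto (fun t => homEval (Q t) d w / homEval (Q t) d v) l (𝓝 0) := by
  set D : ι → ℂ × ℂ → ℂ := fun t u => c t * (u.1 - p t * u.2) ^ d
  have hfD : ∀ u, ∀ᶠ t in l, homEval (Q t) d u ≠ 0 →
      homEval (P t) d u / homEval (Q t) d u - p t = D t u / homEval (Q t) d u := fun u =>
    hsuper.mono fun t ht hQ => by
      simp only [D]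
      rw [← homEval_sub_mul_eq_of_sub_C_mul_eq ht.2 u]
      field_simp
  have hDQw : Tendsto (fun t => D t w / homEval (Q t) d w) l (𝓝 (α - h)) :=
    (hfw.sub hp).congr' (((hfD w).and hQw).mono fun t ht => ht.1 ht.2)
  have hDQv : Tendsto (fun t => D t v / homEval (Q t) d v) l (𝓝 0) := by
    simpa using (hfv.sub hp).congr' (((hfD v).and hQv).mono fun t ht => ht.1 ht.2)
  have hlin : ∀ u : ℂ × ℂ, Tendsto (fun t => u.1 - p t * u.2) l (𝓝 (u.1 - h * u.2)) :=
    fun u => tendsto_const_nhds.sub (hp.mul_const _)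
  have hDD : Tendsto (fun t => D t w / D t v) l
      (𝓝 (((w.1 - h * w.2) / (v.1 - h * v.2)) ^ d)) :=
    (((hlin w).div (hlin v) (sub_ne_zero.mpr hv)).pow d).congr' <|
      hsuper.mono fun t ht => by
        simp only [D, Pi.div_apply]
        rw [mul_div_mul_left _ _ ht.1, div_pow]
  have hDw : ∀ᶠ t in l, D t w ≠ 0 :=
    (hDQw.eventually_ne (sub_ne_zero.mpr hα)).mono fun t ht => (div_ne_zero_iff.mp ht).1
  have hDv : ∀ᶠ t in l, D t v ≠ 0 :=
    (hsuper.and ((hlin v).eventually_ne (sub_ne_zero.mpr hv))).mono fun t ht =>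
      mul_ne_zero ht.1.1 (pow_ne_zero _ ht.2)
  -- `Q(w)/Q(v) = (D(w)/Q(w))⁻¹ · (D(w)/D(v)) · (D(v)/Q(v))`, and the last factor tends to `0`
  have hprod := ((hDQw.inv₀ (sub_ne_zero.mpr hα)).mul hDD).mul hDQv
  rw [mul_zero] at hprod
  refine hprod.congr' ?_
  filter_upwards [hQv, hQw, hDw, hDv] with t h1 h2 h3 h4
  field_simp

theorem homEval_sub_C_mul_ne_zero_of_tendsto_chordalP1 [l.NeBot] {n : ℕ} (hn : n ≠ 0)
    {A B : ℂ[X]} (hAB : IsCoprime A B) (hABdeg : max A.natDegree B.natDegree = n)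
    (hPQ : ∀ᶠ t in l, IsCoprime (P t) (Q t) ∧ max (P t).natDegree (Q t).natDegree = d)
    (hsuper : ∀ᶠ t in l, c t ≠ 0 ∧ P t - C (p t) * Q t = C (c t) * (X - C (p t)) ^ d)
    (hconv : ∀ v : ℂ × ℂ, v ≠ 0 → v.1 ≠ h * v.2 →
      Tendsto (fun t => chordalP1 (homEval (P t) d v, homEval (Q t) d v)
        (homEval A n v, homEval B n v)) l (𝓝 0))
    (hp : Tendsto p l (𝓝 h)) {v₀ : ℂ × ℂ} (hv₀ : v₀ ≠ 0) (hv₀h : v₀.1 ≠ h * v₀.2) :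
    homEval (A - C h * B) n v₀ ≠ 0 := by
  intro hR
  rw [homEval_sub, homEval_C_mul, sub_eq_zero] at hR
  have conv := fun v hv hvh hBv =>
    tendsto_homEval_div_homEval_of_chordalP1 (A := A) hPQ hv hBv (hconv v hv hvh)
  have hBv₀ : homEval B n v₀ ≠ 0 := fun hB0 =>
    homEval_prodMk_ne_zero_of_isCoprime hAB hABdeg hv₀ (by simp [hR, hB0])
  obtain ⟨hQv₀, hfv₀⟩ := conv v₀ hv₀ hv₀h hBv₀
  rw [hR, mul_div_cancel_right₀ _ hBv₀] at hfv₀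
  -- interpolation nodes `x` with `x ≠ h`, `φ x ≠ h` and `φ x ≠ ∞`
  have hF : (X - C h) * (A - C h * B) * B ≠ 0 :=
    mul_ne_zero (mul_ne_zero (X_sub_C_ne_zero h)
      (sub_C_mul_ne_zero_of_isCoprime hAB (hABdeg ▸ hn) h))
      (ne_zero_of_isCoprime_right hAB (hABdeg ▸ hn))
  obtain ⟨s, hs, hsF⟩ := exists_finset_card_eq_forall_eval_ne_zero hF (d + 1)
  have hdegQ : ∀ᶠ t in l, (Q t).natDegree ≤ d := hPQ.mono fun t ht => ht.2 ▸ le_max_right _ _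
  refine not_forall_tendsto_eval_div_homEval_zero hs (hdegQ.and hQv₀) fun x hx => ?_
  have hFx := hsF x hx
  simp only [mul_ne_zero_iff, eval_sub, eval_X, eval_C, eval_mul, sub_ne_zero] at hFx
  obtain ⟨⟨hxh, hRx⟩, hBx⟩ := hFx
  have hA : A.natDegree ≤ n := hABdeg ▸ le_max_left _ _
  have hB : B.natDegree ≤ n := hABdeg ▸ le_max_right _ _
  obtain ⟨hQx, hfx⟩ := conv (x, 1) (by simp) (by simpa using hxh) (by rwa [homEval_mk_one hB])
  have hφx : homEval A n (x, 1) / homEval B n (x, 1) ≠ h := by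
    rwa [homEval_mk_one hA, homEval_mk_one hB, Ne, div_eq_iff hBx]
  refine (tendsto_homEval_div_homEval_zero hsuper hp hv₀h hφx hQv₀ hQx hfv₀ hfx).congr' ?_
  filter_upwards [hdegQ] with t ht
  rw [homEval_mk_one ht]

end Family

theorem degenerating_escape_rate_stmt15_general
    (d : ℕ) (hd : 1 < d) (h : ℂ)
    (A B : Polynomial ℂ) (hABcop : IsCoprime A B)
    (hABdeg : max A.natDegree B.natDegree = d - 1)
    (P Q : ℂ → Polynomial ℂ) (p c : ℂ → ℂ)
    (h_deg : ∀ t ∈ Metric.ball (0 : ℂ) 1 \ {0},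
      IsCoprime (P t) (Q t) ∧ max (P t).natDegree (Q t).natDegree = d)
    (h_super : ∀ t ∈ Metric.ball (0 : ℂ) 1 \ {0},
      c t ≠ 0 ∧ P t - C (p t) * Q t = C (c t) * (X - C (p t)) ^ d)
    (h_conv : ∀ K : Set (ℂ × ℂ), IsCompact K →
      (∀ v ∈ K, v ≠ ((0 : ℂ), (0 : ℂ)) ∧ v.1 ≠ h * v.2) →
      ∀ ε : ℝ, 0 < ε → ∀ᶠ t in 𝓝[Metric.ball (0 : ℂ) 1 \ {0}] (0 : ℂ), ∀ v ∈ K,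
        chordalP1 (homEval (P t) d v, homEval (Q t) d v)
          (homEval A (d - 1) v, homEval B (d - 1) v) < ε)
    (h_p : Tendsto p (𝓝[Metric.ball (0 : ℂ) 1 \ {0}] (0 : ℂ)) (𝓝 h)) :
    ∃ c0 : ℂ, c0 ≠ 0 ∧ A - C h * B = C c0 * (X - C h) ^ (d - 1) := by
  have : (𝓝[Metric.ball (0 : ℂ) 1 \ {0}] (0 : ℂ)).NeBot := by
    rw [Set.sdiff_eq, nhdsWithin_inter_of_mem
      (mem_nhdsWithin_of_mem_nhds (Metric.ball_mem_nhds 0 one_pos))]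
    infer_instance
  have hmem : ∀ᶠ t in 𝓝[Metric.ball (0 : ℂ) 1 \ {0}] (0 : ℂ), t ∈ Metric.ball (0 : ℂ) 1 \ {0} :=
    eventually_mem_nhdsWithin
  have hR : ∀ v : ℂ × ℂ, v ≠ 0 → v.1 ≠ h * v.2 → homEval (A - C h * B) (d - 1) v ≠ 0 :=
    fun v hv hvh => homEval_sub_C_mul_ne_zero_of_tendsto_chordalP1 (by omega) hABcop hABdeg
      (hmem.mono h_deg) (hmem.mono h_super)
      (fun v hv hvh => Metric.tendsto_nhds.mpr fun ε hε =>
        (h_conv {v} isCompact_singleton (by simpa using ⟨hv, hvh⟩) ε hε).mono fun t ht => by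
          simpa [abs_of_nonneg (chordalP1_nonneg _ _)] using ht)
      h_p hv hvh
  have hRdeg : (A - C h * B).natDegree ≤ d - 1 :=
    (natDegree_sub_le_of_le (hABdeg ▸ le_max_left _ _)
      ((natDegree_C_mul_le _ _).trans (hABdeg ▸ le_max_right _ _))).trans_eq (max_self _)
  have hRcoeff : (A - C h * B).coeff (d - 1) ≠ 0 := by
    simpa [homEval_mk_zero] using hR (1, 0) (by simp) (by simp)
  have hRroot : ∀ z, (A - C h * B).IsRoot z → z = h := fun z hz => by_contra fun hzh =>
    hR (z, 1) (by simp) (by simpa using hzh) (by rwa [homEval_mk_one hRdeg])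
  have hRnat := natDegree_eq_of_le_of_coeff_ne_zero hRdeg hRcoeff
  exact ⟨_, by rwa [leadingCoeff, hRnat], eq_C_leadingCoeff_mul_X_sub_C_pow hRnat hRroot⟩

/-- Let `f_t = P_t/Q_t` be a holomorphic family of rational maps of degree
`d > 1` on `ℙ¹`, parameterized by the punctured disk, such that each `f_t` is Möbius conjugate
to a polynomial — encoded by a totally ramified (superattracting) fixed point `p t`, i.e.
`P_t − p_t Q_t = c_t (X − p_t)^d` — suppose `f_t → φ = A/B` of degree `d − 1` locally
uniformly on `ℙ¹ \ {h}` (in the chordal metric, via homogeneous coordinates), and suppose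
`p_t → h`.  Then the limit map `φ` satisfies `φ⁻¹(h) = {h}`, i.e.
`A − h·B = c₀·(X − h)^{d−1}` for some `c₀ ≠ 0`. -/
theorem degenerating_escape_rate_stmt15
    (d : ℕ) (hd : 1 < d) (h : ℂ)
    (A B : Polynomial ℂ) (hABcop : IsCoprime A B)
    (hABdeg : max A.natDegree B.natDegree = d - 1)
    (P Q : ℂ → Polynomial ℂ) (p c : ℂ → ℂ)
    (h_hol : ∀ i : ℕ,
      DifferentiableOn ℂ (fun t => (P t).coeff i) (Metric.ball (0 : ℂ) 1 \ {0}) ∧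
      DifferentiableOn ℂ (fun t => (Q t).coeff i) (Metric.ball (0 : ℂ) 1 \ {0}))
    (h_deg : ∀ t ∈ Metric.ball (0 : ℂ) 1 \ {0},
      IsCoprime (P t) (Q t) ∧ max (P t).natDegree (Q t).natDegree = d)
    (h_super : ∀ t ∈ Metric.ball (0 : ℂ) 1 \ {0},
      c t ≠ 0 ∧ P t - C (p t) * Q t = C (c t) * (X - C (p t)) ^ d)
    (h_conv : ∀ K : Set (ℂ × ℂ), IsCompact K →
      (∀ v ∈ K, v ≠ ((0 : ℂ), (0 : ℂ)) ∧ v.1 ≠ h * v.2) →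
      ∀ ε : ℝ, 0 < ε → ∀ᶠ t in 𝓝[Metric.ball (0 : ℂ) 1 \ {0}] (0 : ℂ), ∀ v ∈ K,
        chordalP1 (homEval (P t) d v, homEval (Q t) d v)
          (homEval A (d - 1) v, homEval B (d - 1) v) < ε)
    (h_p : Tendsto p (𝓝[Metric.ball (0 : ℂ) 1 \ {0}] (0 : ℂ)) (𝓝 h)) :
    ∃ c0 : ℂ, c0 ≠ 0 ∧ A - C h * B = C c0 * (X - C h) ^ (d - 1) :=
  degenerating_escape_rate_stmt15_general d hd h A B hABcop hABdeg P Q p c h_deg h_super h_conv h_p
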